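/- Let a, b ∈ ℂ and let I ⊆ F be the two-sided ideal generated by the three elements x₂x₁ − x₁x₂, x₃x₁ − x₁x₃ − a x₁², and x₃x₂ − x₂x₃ + (b − 2a) x₁x₂. Then the images in F/I of the monomials x₁^{a₁} x₂^{a₂} x₃^{a₃}, over all a₁, a₂, a₃ ∈ ℕ, form a ℂ-basis of F/I. (This quotient is the Nichols algebra associated to the braiding of type R_{1,1} with t = 1; in particular it has Gelfand–Kirillov dimension 3.) -/

import Mathlib

/-!
The ordered monomials span: the relations rewrite `x₂x₁`, `x₃x₁` and `x₃x₂` in ordered form, so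
left multiplication by a generator sends an ordered monomial to a combination of ordered monomials
(for `x₃`: `x₃ · x₁^m x₂^n x₃^p = x₁^m x₂^n x₃^{p+1} + (m a − n (b − 2a)) x₁^{m+1} x₂^n x₃^p`), and
their span is a left ideal containing `1`.

They are independent because the quotient acts on `ℂ[x₁, x₂, x₃]`, with `x₁`, `x₂` acting by
multiplication and `x₃` by `x₃ + x₁ (a x₁∂₁ − (b − 2a) x₂∂₂)`, which copies the formula above
(`x₁∂₁` and `x₂∂₂` multiply `x₁^m x₂^n x₃^p` by `m` and `n`). Applied to `1`, the ordered monomial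
`x₁^m x₂^n x₃^p` gives the polynomial `x₁^m x₂^n x₃^p`.
-/

/-- The free associative unital `ℂ`-algebra on three generators. -/
abbrev F : Type := FreeAlgebra ℂ (Fin 3)

/-- The generators `x₁ = X 0`, `x₂ = X 1`, `x₃ = X 2`. -/
noncomputable def X (i : Fin 3) : F := FreeAlgebra.ι ℂ i

/-- The generating set of the ideal: `x₂x₁ − x₁x₂`, `x₃x₁ − x₁x₃ − a x₁²`,
`x₃x₂ − x₂x₃ + (b − 2a) x₁x₂`. -/
noncomputable def S (a b : ℂ) : Set F :=
  {X 1 * X 0 - X 0 * X 1,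
   X 2 * X 0 - X 0 * X 2 - a • (X 0 * X 0),
   X 2 * X 1 - X 1 * X 2 + (b - 2 * a) • (X 0 * X 1)}

/-- The relation whose two-sided-ideal closure is the ideal generated by `S a b`;
`RingQuot (rel a b)` is the quotient `F/I`. -/
def rel (a b : ℂ) : F → F → Prop := fun x y => x ∈ S a b ∧ y = 0

section Relations

variable {R A : Type*} [CommRing R] [Ring A] [Algebra R A]

structure R11Relations (a c : R) (u v w : A) : Prop where
  v_mul_u : v * u = u * v
  w_mul_u : w * u = u * w + a • (u * u)
  w_mul_v : w * v = v * w - c • (u * v)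

def orderedMonomial (u v w : A) (e : ℕ × ℕ × ℕ) : A := u ^ e.1 * v ^ e.2.1 * w ^ e.2.2

lemma map_orderedMonomial {B : Type*} [Ring B] [Algebra R B] (f : A →ₐ[R] B) (u v w : A)
    (e : ℕ × ℕ × ℕ) :
    f (orderedMonomial u v w e) = orderedMonomial (f u) (f v) (f w) e := by
  simp only [orderedMonomial, map_mul, map_pow]

lemma u_mul_orderedMonomial (u v w : A) (m n p : ℕ) :
    u * orderedMonomial u v w (m, n, p) = orderedMonomial u v w (m + 1, n, p) := by
  simp only [orderedMonomial, ← mul_assoc, ← pow_succ']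

namespace R11Relations

variable {a c : R} {u v w : A}

lemma v_mul_orderedMonomial (h : R11Relations a c u v w) (m n p : ℕ) :
    v * orderedMonomial u v w (m, n, p) = orderedMonomial u v w (m, n + 1, p) := by
  simp only [orderedMonomial, ← mul_assoc, (Commute.pow_right h.v_mul_u m).eq, pow_succ']

lemma w_mul_u_pow (h : R11Relations a c u v w) (m : ℕ) :
    w * u ^ m = u ^ m * w + (m * a) • u ^ (m + 1) := by
  induction m with
  | zero => simp
  | succ m ih =>
    rw [pow_succ, ← mul_assoc, ih, add_mul, mul_assoc, h.w_mul_u]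
    simp only [mul_add, mul_smul_comm, smul_mul_assoc, ← mul_assoc, ← pow_succ]
    push_cast
    module

lemma w_mul_v_pow (h : R11Relations a c u v w) (n : ℕ) :
    w * v ^ n = v ^ n * w - (n * c) • (u * v ^ n) := by
  induction n with
  | zero => simp
  | succ n ih =>
    rw [pow_succ, ← mul_assoc, ih, sub_mul, mul_assoc, h.w_mul_v, smul_mul_assoc, mul_assoc u,
      ← pow_succ, mul_sub, mul_smul_comm, ← mul_assoc, ← mul_assoc, ← pow_succ,
      (Commute.pow_left h.v_mul_u n).eq, mul_assoc, ← pow_succ]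
    push_cast
    module

lemma w_mul_orderedMonomial (h : R11Relations a c u v w) (m n p : ℕ) :
    w * orderedMonomial u v w (m, n, p) = orderedMonomial u v w (m, n, p + 1) +
      (m * a - n * c) • orderedMonomial u v w (m + 1, n, p) := by
  simp only [orderedMonomial]
  rw [← mul_assoc, ← mul_assoc, h.w_mul_u_pow, add_mul, add_mul, mul_assoc (u ^ m) w,
    h.w_mul_v_pow]
  simp only [mul_sub, sub_mul, mul_smul_comm, smul_mul_assoc, ← mul_assoc, ← pow_succ]
  rw [mul_assoc (u ^ m * v ^ n) w, ← pow_succ']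
  module

lemma span_orderedMonomial_eq_top (h : R11Relations a c u v w)
    (hgen : Algebra.adjoin R {u, v, w} = ⊤) :
    Submodule.span R (Set.range (orderedMonomial u v w)) = ⊤ := by
  set M := Submodule.span R (Set.range (orderedMonomial u v w))
  have hmem (e : ℕ × ℕ × ℕ) : orderedMonomial u v w e ∈ M := Submodule.subset_span ⟨e, rfl⟩
  have hstable (x : A) (hx : x ∈ Algebra.adjoin R {u, v, w}) : ∀ y ∈ M, x * y ∈ M := by
    induction hx using Algebra.adjoin_induction with
    | mem x hx =>
      refine fun y hy => (Submodule.span_le (p := M.comap (LinearMap.mulLeft R x))).mpr ?_ hy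
      rintro _ ⟨⟨m, n, p⟩, rfl⟩
      rw [SetLike.mem_coe, Submodule.mem_comap, LinearMap.mulLeft_apply]
      rcases hx with rfl | rfl | rfl
      · rw [u_mul_orderedMonomial]; exact hmem _
      · rw [h.v_mul_orderedMonomial]; exact hmem _
      · rw [h.w_mul_orderedMonomial]; exact add_mem (hmem _) (M.smul_mem _ (hmem _))
    | algebraMap r => exact fun y hy => (Algebra.smul_def r y).symm ▸ M.smul_mem r hy
    | add x x' _ _ hx hx' => exact fun y hy => (add_mul x x' y).symm ▸ add_mem (hx y hy) (hx' y hy)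
    | mul x x' _ _ hx hx' => exact fun y hy => (mul_assoc x x' y).symm ▸ hx _ (hx' y hy)
  refine eq_top_iff.mpr fun x _ => mul_one x ▸ hstable x (hgen ▸ trivial) 1 ?_
  simpa [orderedMonomial] using hmem (0, 0, 0)

end R11Relations

end Relations

section PolynomialAction

open MvPolynomial (pderiv)

variable {R : Type*} [CommRing R]

noncomputable def weightOperator (a c : R) : Module.End R (MvPolynomial (Fin 3) R) :=
  a • (Algebra.lmul R _ (.X 0) * (pderiv 0).toLinearMap) -
    c • (Algebra.lmul R _ (.X 1) * (pderiv 1).toLinearMap)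

lemma weightOperator_apply (a c : R) (f : MvPolynomial (Fin 3) R) :
    weightOperator a c f = .C a * (.X 0 * pderiv 0 f) - .C c * (.X 1 * pderiv 1 f) := by
  simp [weightOperator, MvPolynomial.smul_eq_C_mul]

lemma weightOperator_X_zero_mul (a c : R) (f : MvPolynomial (Fin 3) R) :
    weightOperator a c (.X 0 * f) = .X 0 * weightOperator a c f + .C a * (.X 0 * f) := by
  simp only [weightOperator_apply, Derivation.leibniz, MvPolynomial.pderiv_X_self,
    MvPolynomial.pderiv_X_of_ne zero_ne_one, smul_eq_mul]
  ring

lemma weightOperator_X_one_mul (a c : R) (f : MvPolynomial (Fin 3) R) :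
    weightOperator a c (.X 1 * f) = .X 1 * weightOperator a c f - .C c * (.X 1 * f) := by
  simp only [weightOperator_apply, Derivation.leibniz, MvPolynomial.pderiv_X_self,
    MvPolynomial.pderiv_X_of_ne one_ne_zero, smul_eq_mul]
  ring

lemma weightOperator_X_two_pow (a c : R) (k : ℕ) : weightOperator a c (.X 2 ^ k) = 0 := by
  simp [weightOperator_apply, MvPolynomial.pderiv_X]

noncomputable def polyAction (a c : R) : Fin 3 → Module.End R (MvPolynomial (Fin 3) R) :=
  ![Algebra.lmul R _ (.X 0), Algebra.lmul R _ (.X 1),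
    Algebra.lmul R _ (.X 2) + Algebra.lmul R _ (.X 0) * weightOperator a c]

lemma r11Relations_polyAction (a c : R) :
    R11Relations a c (polyAction a c 0) (polyAction a c 1) (polyAction a c 2) := by
  constructor <;> refine LinearMap.ext fun f => ?_ <;>
    simp only [polyAction, Matrix.cons_val, Module.End.mul_apply, LinearMap.add_apply,
      LinearMap.sub_apply, LinearMap.smul_apply, Algebra.coe_lmul_eq_mul, LinearMap.mul_apply',
      weightOperator_X_zero_mul, weightOperator_X_one_mul, MvPolynomial.smul_eq_C_mul] <;>
    ring

lemma polyAction_two_pow_apply_one (a c : R) (p : ℕ) :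
    (polyAction a c 2 ^ p) 1 = MvPolynomial.X 2 ^ p := by
  induction p with
  | zero => rfl
  | succ p ih =>
    rw [pow_succ', Module.End.mul_apply, ih]
    simp only [polyAction, Matrix.cons_val, LinearMap.add_apply, Module.End.mul_apply,
      Algebra.coe_lmul_eq_mul, LinearMap.mul_apply', weightOperator_X_two_pow, mul_zero, add_zero,
      pow_succ']

lemma orderedMonomial_polyAction_apply_one (a c : R) (e : ℕ × ℕ × ℕ) :
    orderedMonomial (polyAction a c 0) (polyAction a c 1) (polyAction a c 2) e 1 =
      MvPolynomial.X 0 ^ e.1 * MvPolynomial.X 1 ^ e.2.1 * MvPolynomial.X 2 ^ e.2.2 := by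
  have hpow (i : Fin 3) (k : ℕ) :
      Algebra.lmul R (MvPolynomial (Fin 3) R) (.X i) ^ k = Algebra.lmul R _ (.X i ^ k) :=
    (map_pow _ _ _).symm
  simp only [orderedMonomial, Module.End.mul_apply, polyAction_two_pow_apply_one]
  rw [polyAction, Matrix.cons_val_zero, Matrix.cons_val_one, Matrix.cons_val_zero, hpow, hpow]
  simp only [Algebra.coe_lmul_eq_mul, LinearMap.mul_apply', mul_assoc]

lemma linearIndependent_X_pow_mul_X_pow_mul_X_pow :
    LinearIndependent R (fun e : ℕ × ℕ × ℕ =>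
      (MvPolynomial.X 0 ^ e.1 * MvPolynomial.X 1 ^ e.2.1 * MvPolynomial.X 2 ^ e.2.2 :
        MvPolynomial (Fin 3) R)) := by
  let exponent (e : ℕ × ℕ × ℕ) : Fin 3 →₀ ℕ :=
    Finsupp.single 0 e.1 + Finsupp.single 1 e.2.1 + Finsupp.single 2 e.2.2
  have hinj : Function.Injective exponent := by
    rintro ⟨m, n, p⟩ ⟨m', n', p'⟩ he
    have h0 := DFunLike.congr_fun he 0
    have h1 := DFunLike.congr_fun he 1
    have h2 := DFunLike.congr_fun he 2
    simp only [exponent, Finsupp.coe_add, Pi.add_apply, Finsupp.single_eq_same,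
      Finsupp.single_eq_of_ne, ne_eq, Fin.reduceEq, not_false_eq_true, add_zero, zero_add]
      at h0 h1 h2
    exact Prod.ext h0 (Prod.ext h1 h2)
  have hfun : (fun e : ℕ × ℕ × ℕ =>
      (MvPolynomial.X 0 ^ e.1 * MvPolynomial.X 1 ^ e.2.1 * MvPolynomial.X 2 ^ e.2.2 :
        MvPolynomial (Fin 3) R)) = MvPolynomial.basisMonomials (Fin 3) R ∘ exponent := by
    funext e
    simp [exponent, MvPolynomial.coe_basisMonomials, MvPolynomial.X_pow_eq_monomial,
      MvPolynomial.monomial_mul]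
  rw [hfun]
  exact (MvPolynomial.basisMonomials (Fin 3) R).linearIndependent.comp exponent hinj

lemma linearIndependent_orderedMonomial_of_algHom {A : Type*} [Ring A] [Algebra R A] {a c : R}
    {u v w : A} (ρ : A →ₐ[R] Module.End R (MvPolynomial (Fin 3) R))
    (hu : ρ u = polyAction a c 0) (hv : ρ v = polyAction a c 1) (hw : ρ w = polyAction a c 2) :
    LinearIndependent R (orderedMonomial u v w) := by
  refine LinearIndependent.of_comp ((LinearMap.applyₗ 1).comp ρ.toLinearMap) ?_
  convert linearIndependent_X_pow_mul_X_pow_mul_X_pow (R := R) using 1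
  funext e
  simp [map_orderedMonomial, hu, hv, hw, orderedMonomial_polyAction_apply_one]

end PolynomialAction

section Quotient

variable (a b : ℂ)

local notation "π" => RingQuot.mkAlgHom ℂ (rel a b)

lemma forall_mem_S_map_eq_zero_iff {B : Type*} [Ring B] [Algebra ℂ B] (f : F →ₐ[ℂ] B) :
    (∀ r ∈ S a b, f r = 0) ↔ R11Relations a (b - 2 * a) (f (X 0)) (f (X 1)) (f (X 2)) := by
  simp only [S, Set.mem_insert_iff, Set.mem_singleton_iff, forall_eq_or_imp, forall_eq,
    map_sub, map_add, map_mul, map_smul]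
  constructor
  · rintro ⟨h₁, h₂, h₃⟩
    refine ⟨sub_eq_zero.mp h₁, ?_, ?_⟩
    · rw [← sub_eq_zero, ← h₂]; abel
    · rw [← sub_eq_zero, ← h₃]; abel
  · rintro ⟨h₁, h₂, h₃⟩
    exact ⟨by rw [h₁, sub_self], by rw [h₂]; abel, by rw [h₃]; abel⟩

lemma r11Relations_mkAlgHom : R11Relations a (b - 2 * a) (π (X 0)) (π (X 1)) (π (X 2)) :=
  (forall_mem_S_map_eq_zero_iff a b π).mp fun r hr => by
    simpa using RingQuot.mkAlgHom_rel ℂ (show rel a b r 0 from ⟨hr, rfl⟩)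

lemma adjoin_mkAlgHom_X_eq_top : Algebra.adjoin ℂ {π (X 0), π (X 1), π (X 2)} = ⊤ := by
  have hX : Set.range (FreeAlgebra.ι ℂ : Fin 3 → F) = {X 0, X 1, X 2} := by
    ext; simp [X, Fin.exists_fin_succ, eq_comm]
  rw [← Set.image_singleton, ← Set.image_insert_eq, ← Set.image_insert_eq, Algebra.adjoin_image,
    ← hX, FreeAlgebra.adjoin_range_ι, Algebra.map_top, AlgHom.range_eq_top]
  exact RingQuot.mkAlgHom_surjective ℂ (rel a b)

noncomputable def quotAction : RingQuot (rel a b) →ₐ[ℂ] Module.End ℂ (MvPolynomial (Fin 3) ℂ) :=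
  RingQuot.liftAlgHom ℂ ⟨FreeAlgebra.lift ℂ (polyAction a (b - 2 * a)), by
    rintro x _ ⟨hx, rfl⟩
    rw [map_zero]
    refine (forall_mem_S_map_eq_zero_iff a b _).mpr ?_ x hx
    simpa [X] using r11Relations_polyAction a (b - 2 * a)⟩

lemma quotAction_mkAlgHom_X (i : Fin 3) :
    quotAction a b (π (X i)) = polyAction a (b - 2 * a) i := by
  simp [quotAction, X]

end Quotient

/-- the images in `F/I` of the monomials `x₁^{a₁} x₂^{a₂} x₃^{a₃}`
form a `ℂ`-basis of `F/I`. -/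
theorem basis_R11_t_one (a b : ℂ) :
    LinearIndependent ℂ (fun e : ℕ × ℕ × ℕ =>
      RingQuot.mkAlgHom ℂ (rel a b) (X 0 ^ e.1 * X 1 ^ e.2.1 * X 2 ^ e.2.2)) ∧
    Submodule.span ℂ (Set.range (fun e : ℕ × ℕ × ℕ =>
      RingQuot.mkAlgHom ℂ (rel a b) (X 0 ^ e.1 * X 1 ^ e.2.1 * X 2 ^ e.2.2))) = ⊤ := by
  set π := RingQuot.mkAlgHom ℂ (rel a b)
  have hmon : (fun e : ℕ × ℕ × ℕ => π (X 0 ^ e.1 * X 1 ^ e.2.1 * X 2 ^ e.2.2)) =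
      orderedMonomial (π (X 0)) (π (X 1)) (π (X 2)) :=
    funext (map_orderedMonomial π (X 0) (X 1) (X 2))
  rw [hmon]
  exact ⟨linearIndependent_orderedMonomial_of_algHom (quotAction a b) (quotAction_mkAlgHom_X a b 0)
      (quotAction_mkAlgHom_X a b 1) (quotAction_mkAlgHom_X a b 2),
    (r11Relations_mkAlgHom a b).span_orderedMonomial_eq_top (adjoin_mkAlgHom_X_eq_top a b)⟩
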